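/- Let f and g be polynomials with rational coefficients, with g nonzero, and suppose the rational number f(r)/g(r) is an integer for infinitely many positive integers r. Then there exists a polynomial h with rational coefficients such that f(r)/g(r) = h(r) for all sufficiently large integers r for which g(r) ≠ 0, i.e., g divides f in ℚ[x]. Moreover deg h = deg f − deg g. -/

import Mathlib

/-!
Write `f = g q + r` with `deg r < deg g` and pick `D > 0` such that `D q(n) ∈ ℤ` for every
integer `n`. Whenever `f(n)/g(n)` is an integer, so is `D r(n)/g(n) = D f(n)/g(n) - D q(n)`;
since `r(n)/g(n) → 0`, this integer vanishes for large `n`. Hence `r` has infinitely many roots,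
so `r = 0` and `g ∣ f`.
-/

open Polynomial Filter Topology

theorem Filter.Tendsto.eventually_intCast_eq_zero {α R : Type*} [Ring R] [LinearOrder R]
    [IsStrictOrderedRing R] [TopologicalSpace R] [OrderTopology R] {l : Filter α} {u : α → R}
    (hu : Tendsto u l (𝓝 0)) : ∀ᶠ x in l, ∀ z : ℤ, u x = z → u x = 0 := by
  filter_upwards [hu (Ioo_mem_nhds neg_one_lt_zero one_pos)] with x ⟨hlo, hhi⟩ z hz
  rw [hz] at hlo hhi ⊢
  norm_cast at hlo hhi ⊢
  omega

namespace Polynomial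

theorem exists_pos_nat_mul_eval_intCast_eq_intCast (q : ℚ[X]) :
    ∃ D : ℕ, 0 < D ∧ ∀ n : ℤ, ∃ z : ℤ, (D : ℚ) * q.eval (n : ℚ) = z := by
  induction q using Polynomial.induction_on' with
  | monomial k a =>
    refine ⟨a.den, a.pos, fun n => ⟨a.num * n ^ k, ?_⟩⟩
    rw [eval_monomial, ← mul_assoc, mul_comm (a.den : ℚ), Rat.mul_den_eq_num]
    push_cast
    rfl
  | add p q hp hq =>
    obtain ⟨D₁, hD₁, hp⟩ := hp
    obtain ⟨D₂, hD₂, hq⟩ := hq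
    refine ⟨D₁ * D₂, Nat.mul_pos hD₁ hD₂, fun n => ?_⟩
    obtain ⟨z₁, hz₁⟩ := hp n
    obtain ⟨z₂, hz₂⟩ := hq n
    refine ⟨D₂ * z₁ + D₁ * z₂, ?_⟩
    push_cast
    rw [eval_add, ← hz₁, ← hz₂]
    ring

theorem eventually_eval_natCast_ne_zero {R : Type*} [CommRing R] [IsDomain R] [CharZero R]
    {p : R[X]} (hp : p ≠ 0) : ∀ᶠ n : ℕ in atTop, p.eval (n : R) ≠ 0 := by
  rw [← Nat.cofinite_eq_atTop]
  exact ((finite_setOfPred_isRoot hp).preimage Nat.cast_injective.injOn).eventually_cofinite_notMem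

theorem eq_zero_of_frequently_eval_natCast_eq_zero {R : Type*} [CommRing R] [IsDomain R]
    [CharZero R] {p : R[X]} (h : ∃ᶠ n : ℕ in atTop, p.eval (n : R) = 0) : p = 0 := by
  by_contra hp
  exact h (eventually_eval_natCast_ne_zero hp)

theorem eq_zero_of_frequently_eval_div_eval_eq_intCast {𝕜 : Type*} [NormedField 𝕜]
    [LinearOrder 𝕜] [IsStrictOrderedRing 𝕜] [Archimedean 𝕜] [OrderTopology 𝕜] {r g : 𝕜[X]}
    (hdeg : r.degree < g.degree)
    (h : ∃ᶠ n : ℕ in atTop, ∃ z : ℤ, r.eval (n : 𝕜) / g.eval (n : 𝕜) = z) : r = 0 := by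
  have hsmall := ((div_tendsto_atTop_zero_of_degree_lt r g hdeg).comp
    tendsto_natCast_atTop_atTop).eventually_intCast_eq_zero
  have hg := eventually_eval_natCast_ne_zero (ne_zero_of_degree_gt hdeg)
  refine eq_zero_of_frequently_eval_natCast_eq_zero ((h.and_eventually (hsmall.and hg)).mono ?_)
  rintro n ⟨⟨z, hz⟩, hzero, hgn⟩
  exact (div_eq_zero_iff.mp (hzero z hz)).resolve_right hgn

theorem dvd_of_frequently_eval_div_eval_eq_intCast {f g : ℚ[X]} (hg : g ≠ 0)
    (h : ∃ᶠ n : ℕ in atTop, ∃ z : ℤ, f.eval (n : ℚ) / g.eval (n : ℚ) = z) : g ∣ f := by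
  obtain ⟨D, hD, hDq⟩ := exists_pos_nat_mul_eval_intCast_eq_intCast (f / g)
  have hD₀ : (D : ℚ) ≠ 0 := by positivity
  suffices C (D : ℚ) * (f % g) = 0 by
    rw [mul_eq_zero, C_eq_zero] at this
    exact EuclideanDomain.mod_eq_zero.mp (this.resolve_left hD₀)
  refine eq_zero_of_frequently_eval_div_eval_eq_intCast (g := g) ?_ (h.mono ?_)
  · rw [degree_C_mul hD₀]
    exact degree_mod_lt f hg
  rintro n ⟨z, hz⟩
  by_cases hgn : g.eval (n : ℚ) = 0
  · exact ⟨0, by simp [hgn]⟩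
  obtain ⟨w, hw⟩ := hDq n
  rw [Int.cast_natCast] at hw
  refine ⟨D * z - w, ?_⟩
  have hf : f.eval (n : ℚ) = z * g.eval (n : ℚ) := (div_eq_iff hgn).mp hz
  rw [EuclideanDomain.mod_eq_sub_mul_div, eval_mul, eval_C, eval_sub, eval_mul, hf]
  push_cast
  rw [← hw]
  field_simp

end Polynomial

theorem stmt5 (f g : Polynomial ℚ) (hg : g ≠ 0)
    (h : {r : ℕ | 0 < r ∧ ∃ z : ℤ, f.eval (r : ℚ) / g.eval (r : ℚ) = (z : ℚ)}.Infinite) :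
    g ∣ f ∧ ∃ h' : Polynomial ℚ,
      f = g * h' ∧
      (∀ᶠ r : ℕ in Filter.atTop, g.eval (r : ℚ) ≠ 0 →
        f.eval (r : ℚ) / g.eval (r : ℚ) = h'.eval (r : ℚ)) ∧
      h'.natDegree = f.natDegree - g.natDegree := by
  have hfreq : ∃ᶠ n : ℕ in atTop, ∃ z : ℤ, f.eval (n : ℚ) / g.eval (n : ℚ) = z :=
    (Nat.frequently_atTop_iff_infinite.mpr h).mono fun _ hn => hn.2
  obtain ⟨q, rfl⟩ := dvd_of_frequently_eval_div_eval_eq_intCast hg hfreq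
  refine ⟨dvd_mul_right g q, q, rfl, Eventually.of_forall fun n hgn => ?_, ?_⟩
  · rw [eval_mul, mul_div_cancel_left₀ _ hgn]
  · rcases eq_or_ne q 0 with rfl | hq
    · simp
    · rw [natDegree_mul hg hq]
      omega
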